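/- arXiv:2112.12337 — 9 statements merged into one kernel-verified Lean document; each statement's English description precedes it below -/
import Mathlib

section
/- The cooperative learning objective J(θx, θz) = (1/2)‖y − Xθx − Zθz‖² + (ρ/2)‖Xθx − Zθz‖² + λ(‖θx‖₁ + ‖θz‖₁) is equal to (1/2)‖ỹ − X̃β̃‖² + λ(‖θx‖₁ + ‖θz‖₁), where X̃ is the augmented matrix with top row block [X, Z] and bottom row block [−√ρ X, √ρ Z], ỹ = (y, 0), and β̃ = (θx, θz). In particular, the cooperative regression problem is equivalent to a lasso problem on augmented data. -/
open Matrix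

/-! The bottom block row of `X̃ β̃` is `√ρ (Zθz − Xθx)`, so the augmented residual `ỹ − X̃ β̃`
stacks the ordinary residual `y − Xθx − Zθz` on top of `√ρ (Xθx − Zθz)`. Its squared norm is
therefore `‖y − Xθx − Zθz‖² + ρ ‖Xθx − Zθz‖²`, and the penalty terms agree verbatim. -/

section AugmentedResidual

variable {R m p q : Type*} [CommRing R] [Fintype p] [Fintype q]

theorem sum_elim_sub_fromBlocks_mulVec (X : Matrix m p R) (Z : Matrix m q R) (y : m → R)
    (s : R) (θx : p → R) (θz : q → R) :
    Sum.elim y 0 - fromBlocks X Z (-s • X) (s • Z) *ᵥ Sum.elim θx θz =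
      Sum.elim (y - (X *ᵥ θx + Z *ᵥ θz)) (s • (X *ᵥ θx - Z *ᵥ θz)) := by
  rw [fromBlocks_mulVec, Sum.elim_comp_inl, Sum.elim_comp_inr]
  ext (i | i)
  · simp
  · simp only [Pi.sub_apply, Sum.elim_inr, Pi.zero_apply, Pi.add_apply, smul_mulVec,
      neg_smul, neg_mulVec, Pi.neg_apply, Pi.smul_apply, smul_eq_mul]
    ring

variable [Fintype m]

theorem sum_sq_sum_elim {m' : Type*} [Fintype m'] (u : m → R) (v : m' → R) :
    ∑ i, Sum.elim u v i ^ 2 = ∑ i, u i ^ 2 + ∑ i, v i ^ 2 :=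
  Fintype.sum_sum_type _

theorem sum_sq_smul (s : R) (v : m → R) : ∑ i, (s • v) i ^ 2 = s ^ 2 * ∑ i, v i ^ 2 := by
  simp only [Pi.smul_apply, smul_eq_mul, mul_pow, Finset.mul_sum]

theorem sum_sq_sum_elim_sub_fromBlocks_mulVec (X : Matrix m p R) (Z : Matrix m q R)
    (y : m → R) (s : R) (θx : p → R) (θz : q → R) :
    ∑ i, (Sum.elim y 0 i - (fromBlocks X Z (-s • X) (s • Z) *ᵥ Sum.elim θx θz) i) ^ 2 =
      ∑ i, (y i - ((X *ᵥ θx) i + (Z *ᵥ θz) i)) ^ 2 +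
        s ^ 2 * ∑ i, ((X *ᵥ θx) i - (Z *ᵥ θz) i) ^ 2 := by
  simp_rw [← Pi.sub_apply, sum_elim_sub_fromBlocks_mulVec, sum_sq_sum_elim, sum_sq_smul]
  rfl

end AugmentedResidual

theorem coop_objective_eq_augmented_lasso_general
    (n px pz : ℕ) (X : Matrix (Fin n) (Fin px) ℝ) (Z : Matrix (Fin n) (Fin pz) ℝ)
    (y : Fin n → ℝ) (ρ lam : ℝ) (hρ : 0 ≤ ρ)
    (θx : Fin px → ℝ) (θz : Fin pz → ℝ)
    (Xt : Matrix (Fin n ⊕ Fin n) (Fin px ⊕ Fin pz) ℝ)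
    (hXt : Xt = Matrix.fromBlocks X Z (-(Real.sqrt ρ) • X) (Real.sqrt ρ • Z))
    (yt : Fin n ⊕ Fin n → ℝ) (hyt : yt = Sum.elim y 0)
    (βt : Fin px ⊕ Fin pz → ℝ) (hβt : βt = Sum.elim θx θz) :
    (1 / 2) * ∑ i, (y i - (X.mulVec θx i + Z.mulVec θz i)) ^ 2 +
      (ρ / 2) * ∑ i, (X.mulVec θx i - Z.mulVec θz i) ^ 2 +
      lam * ((∑ j, |θx j|) + ∑ j, |θz j|) =
    (1 / 2) * ∑ i, (yt i - Xt.mulVec βt i) ^ 2 +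
      lam * ((∑ j, |θx j|) + ∑ j, |θz j|) := by
  subst hXt hyt hβt
  rw [sum_sq_sum_elim_sub_fromBlocks_mulVec, Real.sq_sqrt hρ]
  ring

/-- The cooperative learning objective equals a lasso objective on the augmented data
`X̃ = [[X, Z], [−√ρ X, √ρ Z]]`, `ỹ = (y, 0)`, `β̃ = (θx, θz)`. -/
theorem coop_objective_eq_augmented_lasso
    (n px pz : ℕ) (X : Matrix (Fin n) (Fin px) ℝ) (Z : Matrix (Fin n) (Fin pz) ℝ)
    (y : Fin n → ℝ) (ρ lam : ℝ) (hρ : 0 ≤ ρ) (hlam : 0 ≤ lam)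
    (θx : Fin px → ℝ) (θz : Fin pz → ℝ)
    (Xt : Matrix (Fin n ⊕ Fin n) (Fin px ⊕ Fin pz) ℝ)
    (hXt : Xt = Matrix.fromBlocks X Z (-(Real.sqrt ρ) • X) (Real.sqrt ρ • Z))
    (yt : Fin n ⊕ Fin n → ℝ) (hyt : yt = Sum.elim y 0)
    (βt : Fin px ⊕ Fin pz → ℝ) (hβt : βt = Sum.elim θx θz) :
    (1 / 2) * ∑ i, (y i - (X.mulVec θx i + Z.mulVec θz i)) ^ 2 +
      (ρ / 2) * ∑ i, (X.mulVec θx i - Z.mulVec θz i) ^ 2 +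
      lam * ((∑ j, |θx j|) + ∑ j, |θz j|) =
    (1 / 2) * ∑ i, (yt i - Xt.mulVec βt i) ^ 2 +
      lam * ((∑ j, |θx j|) + ∑ j, |θz j|) :=
  coop_objective_eq_augmented_lasso_general n px pz X Z y ρ lam hρ θx θz Xt hXt yt hyt βt hβt
end

section
/- Suppose XᵀZ = 0 and both XᵀX and ZᵀZ are invertible. Then the minimizer of J(θx, θz) = (1/2)‖y − Xθx − Zθz‖² + (ρ/2)‖Xθx − Zθz‖² over (θx, θz) is given by θx = (1+ρ)⁻¹(XᵀX)⁻¹Xᵀy and θz = (1+ρ)⁻¹(ZᵀZ)⁻¹Zᵀy, i.e. the solutions are the separate least squares estimates scaled by 1/(1+ρ). In particular when ρ = 1 the fitted values Xθx + Zθz equal the average of the two separate least-squares predictions. -/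
/-!
With `a = Xθx` and `b = Zθz`, the objective depends on the fitted vectors only, and its
expansion around `(a, b)` is a linear term plus the objective at the increments with `y = 0`,
which is nonnegative for `ρ ≥ 0`. The linear term pairs the column spaces of `X` and `Z`
with the two partial gradients, and the normal equations
`Xᵀa = (1+ρ)⁻¹Xᵀy`, `Zᵀb = (1+ρ)⁻¹Zᵀy`, together with `Xᵀb = 0 = Zᵀa` from `XᵀZ = 0`,
say exactly that these pairings vanish.
-/

open Matrix

namespace Cooperative

variable {ι : Type*} [Fintype ι]

/-- The objective `J` as a function of the fitted values `u = Xθx` and `w = Zθz`. -/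
noncomputable def loss (ρ : ℝ) (y u w : ι → ℝ) : ℝ :=
  (1 / 2) * ∑ i, (y i - (u i + w i)) ^ 2 + (ρ / 2) * ∑ i, (u i - w i) ^ 2

/-- The gradient of `loss ρ y` in its first vector argument; by symmetry, `grad ρ y w u` is
the gradient in the second one. -/
def grad (ρ : ℝ) (y u w : ι → ℝ) : ι → ℝ :=
  ρ • (u - w) - (y - u - w)

lemma loss_nonneg {ρ : ℝ} (hρ : 0 ≤ ρ) (y u w : ι → ℝ) : 0 ≤ loss ρ y u w := by
  unfold loss
  positivity

lemma loss_add (ρ : ℝ) (y u w du dw : ι → ℝ) :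
    loss ρ y (u + du) (w + dw) =
      loss ρ y u w + grad ρ y u w ⬝ᵥ du + grad ρ y w u ⬝ᵥ dw + loss ρ 0 du dw := by
  simp only [loss, grad, dotProduct, Pi.add_apply, Pi.sub_apply, Pi.smul_apply,
    Pi.zero_apply, smul_eq_mul, Finset.mul_sum, ← Finset.sum_add_distrib]
  exact Finset.sum_congr rfl fun i _ => by ring

lemma loss_le_add_of_grad_dotProduct_eq_zero {ρ : ℝ} (hρ : 0 ≤ ρ) {y u w du dw : ι → ℝ}
    (hu : grad ρ y u w ⬝ᵥ du = 0) (hw : grad ρ y w u ⬝ᵥ dw = 0) :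
    loss ρ y u w ≤ loss ρ y (u + du) (w + dw) := by
  rw [loss_add, hu, hw]
  linarith [loss_nonneg hρ 0 du dw]

variable {κ : Type*} [Fintype κ]

lemma grad_dotProduct_mulVec_eq_zero {ρ : ℝ} (h1ρ : 1 + ρ ≠ 0) {A : Matrix ι κ ℝ}
    {y u w : ι → ℝ} (hu : Aᵀ *ᵥ u = (1 + ρ)⁻¹ • Aᵀ *ᵥ y) (hw : Aᵀ *ᵥ w = 0) (v : κ → ℝ) :
    grad ρ y u w ⬝ᵥ A *ᵥ v = 0 := by
  have hnormal : Aᵀ *ᵥ grad ρ y u w = 0 := by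
    simp only [grad, mulVec_sub, mulVec_smul, hu, hw]
    match_scalars
    field_simp
    ring
  rw [dotProduct_mulVec, ← mulVec_transpose, hnormal, zero_dotProduct]

end Cooperative

lemma Matrix.transpose_mulVec_mulVec_nonsing_inv_mulVec {ι κ R : Type*} [Fintype ι]
    [Fintype κ] [DecidableEq κ] [CommRing R] {A : Matrix ι κ R} (hA : IsUnit (Aᵀ * A).det)
    (v : κ → R) :
    Aᵀ *ᵥ (A *ᵥ ((Aᵀ * A)⁻¹ *ᵥ v)) = v := by
  rw [mulVec_mulVec, mulVec_mulVec, mul_nonsing_inv _ hA, one_mulVec]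

/-- If `XᵀZ = 0` and `XᵀX`, `ZᵀZ` are invertible, the minimizer of the unpenalized
cooperative objective is the pair of separate least-squares estimates scaled by
`1/(1+ρ)`; and when `ρ = 1` the fitted values are the average of the two separate
least-squares predictions. -/
theorem coop_orthogonal_views_solution
    (n px pz : ℕ) (X : Matrix (Fin n) (Fin px) ℝ) (Z : Matrix (Fin n) (Fin pz) ℝ)
    (y : Fin n → ℝ) (ρ : ℝ) (hρ : 0 ≤ ρ)
    (horth : Xᵀ * Z = 0)
    (hX : IsUnit (Xᵀ * X).det) (hZ : IsUnit (Zᵀ * Z).det)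
    (J : (Fin px → ℝ) → (Fin pz → ℝ) → ℝ)
    (hJ : ∀ θx θz, J θx θz =
      (1 / 2) * ∑ i, (y i - (X.mulVec θx i + Z.mulVec θz i)) ^ 2 +
        (ρ / 2) * ∑ i, (X.mulVec θx i - Z.mulVec θz i) ^ 2)
    (θx : Fin px → ℝ) (θz : Fin pz → ℝ)
    (hθx : θx = (1 + ρ)⁻¹ • (Xᵀ * X)⁻¹.mulVec (Xᵀ.mulVec y))
    (hθz : θz = (1 + ρ)⁻¹ • (Zᵀ * Z)⁻¹.mulVec (Zᵀ.mulVec y)) :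
    (∀ θx' θz', J θx θz ≤ J θx' θz') ∧
      (ρ = 1 →
        (fun i => X.mulVec θx i + Z.mulVec θz i) =
          (1 / 2 : ℝ) • (fun i =>
            X.mulVec ((Xᵀ * X)⁻¹.mulVec (Xᵀ.mulVec y)) i +
              Z.mulVec ((Zᵀ * Z)⁻¹.mulVec (Zᵀ.mulVec y)) i)) := by
  have h1ρ : 1 + ρ ≠ 0 := by positivity
  have hXa : Xᵀ *ᵥ (X *ᵥ θx) = (1 + ρ)⁻¹ • Xᵀ *ᵥ y := by
    rw [hθx, mulVec_smul, mulVec_smul, transpose_mulVec_mulVec_nonsing_inv_mulVec hX]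
  have hZb : Zᵀ *ᵥ (Z *ᵥ θz) = (1 + ρ)⁻¹ • Zᵀ *ᵥ y := by
    rw [hθz, mulVec_smul, mulVec_smul, transpose_mulVec_mulVec_nonsing_inv_mulVec hZ]
  have hXb : Xᵀ *ᵥ (Z *ᵥ θz) = 0 := by rw [mulVec_mulVec, horth, zero_mulVec]
  have hZa : Zᵀ *ᵥ (X *ᵥ θx) = 0 := by
    rw [mulVec_mulVec, ← transpose_transpose X, ← transpose_mul, horth, transpose_zero,
      zero_mulVec]
  refine ⟨fun θx' θz' => ?_, fun hρ1 => ?_⟩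
  · have hmin := Cooperative.loss_le_add_of_grad_dotProduct_eq_zero hρ
      (Cooperative.grad_dotProduct_mulVec_eq_zero h1ρ hXa hXb (θx' - θx))
      (Cooperative.grad_dotProduct_mulVec_eq_zero h1ρ hZb hZa (θz' - θz))
    rw [← mulVec_add, ← mulVec_add, add_sub_cancel, add_sub_cancel] at hmin
    rwa [hJ, hJ]
  · subst hρ1
    ext i
    simp only [hθx, hθz, mulVec_smul, Pi.smul_apply, smul_eq_mul, one_add_one_eq_two]
    ring
end

section
/- If X and Z have full column rank, then the unpenalized cooperative regression objective J(θx, θz) = (1/2)‖y − Xθx − Zθz‖² + (ρ/2)‖Xθx − Zθz‖² with ρ > 0 is strictly convex in (θx, θz), and its unique minimizer is (θ̂x, θ̂z) = M⁻¹(Xᵀy, Zᵀy) where M is the block matrix [[(1+ρ)XᵀX, (1−ρ)XᵀZ], [(1−ρ)ZᵀX, (1+ρ)ZᵀZ]]. -/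
/-!
Write `u = (θx, θz)` as one vector indexed by `Fin px ⊕ Fin pz` and `c = (Xᵀy, Zᵀy)`. Expanding
the squares gives `J = ½ uᵀMu − cᵀu + ½‖y‖²` with
`uᵀMu = ‖Xθx + Zθz‖² + ρ‖Xθx − Zθz‖²`. For `ρ > 0` this vanishes only if `Xθx = Zθz = 0`,
so full column rank makes `M` positive definite. A positive definite quadratic is strictly
convex, and completing the square, `J(θ) = J(θ̂) + ½ (u − û)ᵀM(u − û)` with `û = M⁻¹c`, shows
that `û` is a minimizer; strict convexity makes it the only one.
-/

open Matrix Set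

theorem StrictConvexOn.comp_linearEquiv {𝕜 E F β : Type*} [Semiring 𝕜] [PartialOrder 𝕜]
    [AddCommMonoid E] [AddCommMonoid F] [AddCommMonoid β] [PartialOrder β] [Module 𝕜 E]
    [Module 𝕜 F] [SMul 𝕜 β] {f : F → β} {s : Set F} (hf : StrictConvexOn 𝕜 s f)
    (e : E ≃ₗ[𝕜] F) : StrictConvexOn 𝕜 (e ⁻¹' s) (f ∘ e) :=
  ⟨hf.1.linear_preimage e.toLinearMap, fun x hx y hy hxy a b ha hb hab => by
    simpa only [Function.comp_apply, map_add, map_smul] using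
      hf.2 hx hy (e.injective.ne hxy) ha hb hab⟩

namespace Matrix

variable {ι : Type*} [Fintype ι] {M : Matrix ι ι ℝ}

theorem IsHermitian.dotProduct_mulVec_comm (hM : M.IsHermitian) (v w : ι → ℝ) :
    v ⬝ᵥ M *ᵥ w = w ⬝ᵥ M *ᵥ v := by
  rw [dotProduct_mulVec, ← vecMul_transpose, ← conjTranspose_eq_transpose_of_trivial, hM,
    dotProduct_comm]

theorem IsHermitian.dotProduct_mulVec_smul_add_smul (hM : M.IsHermitian) (v w : ι → ℝ)
    (s t : ℝ) :
    (s • v + t • w) ⬝ᵥ M *ᵥ (s • v + t • w) =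
      s ^ 2 * (v ⬝ᵥ M *ᵥ v) + 2 * s * t * (v ⬝ᵥ M *ᵥ w) + t ^ 2 * (w ⬝ᵥ M *ᵥ w) := by
  simp only [mulVec_add, mulVec_smul, dotProduct_add, add_dotProduct, dotProduct_smul,
    smul_dotProduct, smul_eq_mul, hM.dotProduct_mulVec_comm w v]
  ring

theorem IsHermitian.dotProduct_mulVec_sub (hM : M.IsHermitian) (v w : ι → ℝ) :
    (v - w) ⬝ᵥ M *ᵥ (v - w) = v ⬝ᵥ M *ᵥ v - 2 * (v ⬝ᵥ M *ᵥ w) + w ⬝ᵥ M *ᵥ w := by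
  have := hM.dotProduct_mulVec_smul_add_smul v w 1 (-1)
  rw [one_smul, neg_one_smul, ← sub_eq_add_neg] at this
  rw [this]
  ring

theorem IsHermitian.quadratic_eq_add_of_mulVec_eq (hM : M.IsHermitian) {w c : ι → ℝ}
    (hw : M *ᵥ w = c) (v : ι → ℝ) :
    v ⬝ᵥ M *ᵥ v / 2 - c ⬝ᵥ v = w ⬝ᵥ M *ᵥ w / 2 - c ⬝ᵥ w + (v - w) ⬝ᵥ M *ᵥ (v - w) / 2 := by
  rw [hM.dotProduct_mulVec_sub, hw, dotProduct_comm c v, dotProduct_comm c w]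
  ring

theorem PosDef.strictConvexOn_quadratic (hM : M.PosDef) (c : ι → ℝ) :
    StrictConvexOn ℝ univ (fun v => v ⬝ᵥ M *ᵥ v / 2 - c ⬝ᵥ v) := by
  refine ⟨convex_univ, fun x _ y _ hxy a b ha hb hab => ?_⟩
  -- for `a + b = 1` the Jensen gap is `a b (x - y)ᵀM(x - y) / 2`
  have hpos : 0 < (x - y) ⬝ᵥ M *ᵥ (x - y) := by
    simpa using hM.dotProduct_mulVec_pos (sub_ne_zero.mpr hxy)
  rw [hM.isHermitian.dotProduct_mulVec_sub] at hpos
  have hb' : b = 1 - a := by linarith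
  subst hb'
  simp only [smul_eq_mul, hM.isHermitian.dotProduct_mulVec_smul_add_smul, dotProduct_add,
    dotProduct_smul]
  nlinarith [mul_pos (mul_pos ha hb) hpos]

theorem PosDef.isMinOn_quadratic [DecidableEq ι] (hM : M.PosDef) (c : ι → ℝ) :
    IsMinOn (fun v => v ⬝ᵥ M *ᵥ v / 2 - c ⬝ᵥ v) univ (M⁻¹ *ᵥ c) :=
  isMinOn_univ_iff.mpr fun v => by
  have hsol : M *ᵥ (M⁻¹ *ᵥ c) = c := by
    rw [mulVec_mulVec, mul_nonsing_inv _ ((isUnit_iff_isUnit_det M).mp hM.isUnit), one_mulVec]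
  have hnonneg : 0 ≤ (v - M⁻¹ *ᵥ c) ⬝ᵥ M *ᵥ (v - M⁻¹ *ᵥ c) := by
    simpa using hM.posSemidef.dotProduct_mulVec_nonneg (v - M⁻¹ *ᵥ c)
  rw [hM.isHermitian.quadratic_eq_add_of_mulVec_eq hsol v]
  linarith

theorem dotProduct_transpose_mul_mulVec {m p q R : Type*} [Fintype m] [Fintype p] [Fintype q]
    [CommSemiring R] (A : Matrix m p R) (B : Matrix m q R) (v : p → R) (w : q → R) :
    v ⬝ᵥ (Aᵀ * B) *ᵥ w = (A *ᵥ v) ⬝ᵥ (B *ᵥ w) := by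
  rw [← mulVec_mulVec, dotProduct_transpose_mulVec, dotProduct_comm]

end Matrix

section Cooperative

variable {m p q : Type*} [Fintype m] (X : Matrix m p ℝ) (Z : Matrix m q ℝ) (ρ : ℝ)

def cooperativeMatrix : Matrix (p ⊕ q) (p ⊕ q) ℝ :=
  fromBlocks ((1 + ρ) • (Xᵀ * X)) ((1 - ρ) • (Xᵀ * Z)) ((1 - ρ) • (Zᵀ * X)) ((1 + ρ) • (Zᵀ * Z))

theorem isHermitian_cooperativeMatrix : (cooperativeMatrix X Z ρ).IsHermitian := by
  refine IsHermitian.fromBlocks ?_ ?_ ?_ <;> simp [IsHermitian]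

variable [Fintype p] [Fintype q]

theorem sumElim_dotProduct_cooperativeMatrix_mulVec (a : p → ℝ) (b : q → ℝ) :
    Sum.elim a b ⬝ᵥ cooperativeMatrix X Z ρ *ᵥ Sum.elim a b =
      (X *ᵥ a + Z *ᵥ b) ⬝ᵥ (X *ᵥ a + Z *ᵥ b) + ρ * ((X *ᵥ a - Z *ᵥ b) ⬝ᵥ (X *ᵥ a - Z *ᵥ b)) := by
  simp only [cooperativeMatrix, fromBlocks_mulVec, sumElim_dotProduct_sumElim, smul_mulVec,
    dotProduct_add, dotProduct_smul, smul_eq_mul, dotProduct_transpose_mul_mulVec,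
    Sum.elim_comp_inl, Sum.elim_comp_inr, add_dotProduct, dotProduct_sub, sub_dotProduct,
    dotProduct_comm (Z *ᵥ b) (X *ᵥ a)]
  ring

variable {X Z ρ}

theorem posDef_cooperativeMatrix (hρ : 0 < ρ) (hX : ∀ v, X *ᵥ v = 0 → v = 0)
    (hZ : ∀ w, Z *ᵥ w = 0 → w = 0) : (cooperativeMatrix X Z ρ).PosDef := by
  refine PosDef.of_dotProduct_mulVec_pos (isHermitian_cooperativeMatrix X Z ρ) fun u hu => ?_
  obtain ⟨a, b, rfl⟩ : ∃ a b, u = Sum.elim a b := ⟨_, _, (Sum.elim_comp_inl_inr u).symm⟩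
  rw [star_trivial, sumElim_dotProduct_cooperativeMatrix_mulVec]
  set s := X *ᵥ a + Z *ᵥ b
  set d := X *ᵥ a - Z *ᵥ b
  have hs : 0 ≤ s ⬝ᵥ s := Fintype.sum_nonneg fun i => mul_self_nonneg (s i)
  have hd : 0 ≤ d ⬝ᵥ d := Fintype.sum_nonneg fun i => mul_self_nonneg (d i)
  refine lt_of_le_of_ne (by positivity) fun h => hu ?_
  have hs0 : s = 0 := dotProduct_self_eq_zero.mp (by nlinarith)
  have hd0 : d = 0 := dotProduct_self_eq_zero.mp (by nlinarith)
  have hXa : X *ᵥ a = 0 := by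
    have : (2 : ℝ) • (X *ᵥ a) = s + d := by simp only [s, d]; module
    simpa [hs0, hd0] using this
  have hZb : Z *ᵥ b = 0 := by
    have : (2 : ℝ) • (Z *ᵥ b) = s - d := by simp only [s, d]; module
    simpa [hs0, hd0] using this
  rw [hX a hXa, hZ b hZb]
  exact Sum.elim_zero_zero

theorem cooperative_loss_eq_quadratic (y : m → ℝ) (a : p → ℝ) (b : q → ℝ) :
    (1 / 2) * ∑ i, (y i - ((X *ᵥ a) i + (Z *ᵥ b) i)) ^ 2 +
      (ρ / 2) * ∑ i, ((X *ᵥ a) i - (Z *ᵥ b) i) ^ 2 =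
      Sum.elim a b ⬝ᵥ cooperativeMatrix X Z ρ *ᵥ Sum.elim a b / 2 -
        Sum.elim (Xᵀ *ᵥ y) (Zᵀ *ᵥ y) ⬝ᵥ Sum.elim a b + y ⬝ᵥ y / 2 := by
  rw [sumElim_dotProduct_cooperativeMatrix_mulVec, sumElim_dotProduct_sumElim,
    dotProduct_comm (Xᵀ *ᵥ y), dotProduct_transpose_mulVec, dotProduct_comm (Zᵀ *ᵥ y),
    dotProduct_transpose_mulVec]
  simp only [dotProduct, Pi.add_apply, Pi.sub_apply, Finset.mul_sum, Finset.sum_div,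
    ← Finset.sum_add_distrib, ← Finset.sum_sub_distrib]
  exact Finset.sum_congr rfl fun i _ => by ring

end Cooperative

/-- If `X` and `Z` have full column rank and `ρ > 0`, the unpenalized cooperative
objective is strictly convex in the joint variable `(θx, θz)`, and its unique
minimizer is `M⁻¹(Xᵀy, Zᵀy)` for the block matrix
`M = [[(1+ρ)XᵀX, (1−ρ)XᵀZ], [(1−ρ)ZᵀX, (1+ρ)ZᵀZ]]`. -/
theorem coop_strictly_convex_unique_minimizer
    (n px pz : ℕ) (X : Matrix (Fin n) (Fin px) ℝ) (Z : Matrix (Fin n) (Fin pz) ℝ)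
    (y : Fin n → ℝ) (ρ : ℝ) (hρ : 0 < ρ)
    (hX : ∀ v : Fin px → ℝ, X.mulVec v = 0 → v = 0)
    (hZ : ∀ w : Fin pz → ℝ, Z.mulVec w = 0 → w = 0)
    (J : (Fin px → ℝ) × (Fin pz → ℝ) → ℝ)
    (hJ : ∀ θ, J θ =
      (1 / 2) * ∑ i, (y i - (X.mulVec θ.1 i + Z.mulVec θ.2 i)) ^ 2 +
        (ρ / 2) * ∑ i, (X.mulVec θ.1 i - Z.mulVec θ.2 i) ^ 2)
    (M : Matrix (Fin px ⊕ Fin pz) (Fin px ⊕ Fin pz) ℝ)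
    (hM : M = Matrix.fromBlocks
        ((1 + ρ) • (Xᵀ * X)) ((1 - ρ) • (Xᵀ * Z))
        ((1 - ρ) • (Zᵀ * X)) ((1 + ρ) • (Zᵀ * Z)))
    (θhat : (Fin px → ℝ) × (Fin pz → ℝ))
    (hθhat : θhat = (fun j => M⁻¹.mulVec (Sum.elim (Xᵀ.mulVec y) (Zᵀ.mulVec y)) (Sum.inl j),
      fun j => M⁻¹.mulVec (Sum.elim (Xᵀ.mulVec y) (Zᵀ.mulVec y)) (Sum.inr j))) :
    StrictConvexOn ℝ Set.univ J ∧
      (∀ θ, J θhat ≤ J θ) ∧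
      (∀ θ, (∀ θ', J θ ≤ J θ') → θ = θhat) := by
  obtain rfl : M = cooperativeMatrix X Z ρ := hM
  set c := Sum.elim (Xᵀ *ᵥ y) (Zᵀ *ᵥ y)
  let e := (LinearEquiv.sumArrowLequivProdArrow (Fin px) (Fin pz) ℝ ℝ).symm
  have hMpos := posDef_cooperativeMatrix hρ hX hZ
  have hJe : J = (fun u => u ⬝ᵥ cooperativeMatrix X Z ρ *ᵥ u / 2 - c ⬝ᵥ u) ∘ e +
      fun _ => y ⬝ᵥ y / 2 :=
    funext fun θ => (hJ θ).trans (cooperative_loss_eq_quadratic y θ.1 θ.2)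
  have hconv : StrictConvexOn ℝ univ J :=
    hJe ▸ ((hMpos.strictConvexOn_quadratic c).comp_linearEquiv e).add_const _
  have hmin : IsMinOn J univ θhat := isMinOn_univ_iff.mpr fun θ => by
    have hθe : θhat = e.symm ((cooperativeMatrix X Z ρ)⁻¹ *ᵥ c) := hθhat
    rw [hJe, hθe, Pi.add_apply, Pi.add_apply, Function.comp_apply, e.apply_symm_apply]
    exact add_le_add_left (isMinOn_univ_iff.mp (hMpos.isMinOn_quadratic c) (e θ)) _
  exact ⟨hconv, isMinOn_univ_iff.mp hmin, fun θ hθ =>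
    hconv.eq_of_isMinOn (isMinOn_univ_iff.mpr hθ) hmin trivial trivial⟩
end

section
/- Fix θz. The function θx ↦ (1/2)‖y − Xθx − Zθz‖² + (ρ/2)‖Xθx − Zθz‖² differs by a constant (not depending on θx) from θx ↦ ((1+ρ)/2)‖y* − Xθx‖², where y* = y/(1+ρ) − (1−ρ)Zθz/(1+ρ). Consequently, for fixed θz the partial minimization of the cooperative objective over θx is equivalent to a least squares problem with the penalty-adjusted partial residual y* as response. -/
/-!
Coordinatewise, both sides are quadratics in `a = (X θx)ᵢ` with leading coefficient `(1 + ρ)/2`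
and linear coefficient `-(yᵢ - (1 - ρ) zᵢ)`; completing the square leaves the constant
`ρ (yᵢ - 2 zᵢ)² / (2 (1 + ρ))`, which does not involve `θx`.
-/

open Matrix

lemma coop_loss_eq_partial_residual_sq (ρ y z a : ℝ) (hρ : 1 + ρ ≠ 0) :
    (1 / 2) * (y - (a + z)) ^ 2 + (ρ / 2) * (a - z) ^ 2 =
      ((1 + ρ) / 2) * (y / (1 + ρ) - (1 - ρ) * z / (1 + ρ) - a) ^ 2 +
        ρ * (y - 2 * z) ^ 2 / (2 * (1 + ρ)) := by
  field_simp
  ring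

lemma sum_coop_loss_eq_partial_residual_sq {ι : Type*} [Fintype ι] (ρ : ℝ) (hρ : 1 + ρ ≠ 0)
    (y z a : ι → ℝ) :
    (1 / 2) * ∑ i, (y i - (a i + z i)) ^ 2 + (ρ / 2) * ∑ i, (a i - z i) ^ 2 =
      ((1 + ρ) / 2) * ∑ i, (y i / (1 + ρ) - (1 - ρ) * z i / (1 + ρ) - a i) ^ 2 +
        ∑ i, ρ * (y i - 2 * z i) ^ 2 / (2 * (1 + ρ)) := by
  simp only [Finset.mul_sum, ← Finset.sum_add_distrib]
  exact Finset.sum_congr rfl fun i _ => coop_loss_eq_partial_residual_sq ρ (y i) (z i) (a i) hρ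

/-- For fixed `θz`, the cooperative objective as a function of `θx` differs by a
constant from `((1+ρ)/2)‖y* − Xθx‖²` where `y* = y/(1+ρ) − (1−ρ)Zθz/(1+ρ)` is the
penalty-adjusted partial residual. -/
theorem coop_partial_residual_equivalence
    (n px pz : ℕ) (X : Matrix (Fin n) (Fin px) ℝ) (Z : Matrix (Fin n) (Fin pz) ℝ)
    (y : Fin n → ℝ) (ρ : ℝ) (hρ : 0 ≤ ρ) (θz : Fin pz → ℝ)
    (ystar : Fin n → ℝ)
    (hystar : ystar = fun i => y i / (1 + ρ) - (1 - ρ) * Z.mulVec θz i / (1 + ρ)) :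
    ∃ C : ℝ, ∀ θx : Fin px → ℝ,
      (1 / 2) * ∑ i, (y i - (X.mulVec θx i + Z.mulVec θz i)) ^ 2 +
          (ρ / 2) * ∑ i, (X.mulVec θx i - Z.mulVec θz i) ^ 2 =
        ((1 + ρ) / 2) * ∑ i, (ystar i - X.mulVec θx i) ^ 2 + C := by
  subst hystar
  exact ⟨_, fun θx =>
    sum_coop_loss_eq_partial_residual_sq ρ (by positivity) y (Z *ᵥ θz) (X *ᵥ θx)⟩
end

section
/- In the population cooperative learning problem minimizing E[(1/2)(y − f_X(X) − f_Z(Z))² + (ρ/2)(f_X(X) − f_Z(Z))²], any minimizer (f_X, f_Z) satisfies the fixed-point equations f_X(X) = E[y/(1+ρ) − (1−ρ)f_Z(Z)/(1+ρ) | X] and f_Z(Z) = E[y/(1+ρ) − (1−ρ)f_X(X)/(1+ρ) | Z] almost surely. -/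
/-!
Completing the square pointwise, `coopLoss ρ y a b = (1 + ρ)/2 · (a - T)² + const(y, b)` with
`T = y/(1+ρ) - (1-ρ) b/(1+ρ)`. Hence, with `f_Z(Z)` frozen, a minimizer `f_X(X)` minimizes
`E[(f_X(X) - T)²]` over square-integrable functions of `X`. Perturbing it by `t · 1_{X ∈ A}`
gives `0 ≤ 2t E[(f_X(X) - T); X ∈ A] + t² P(X ∈ A)` for all `t`, so the linear coefficient
vanishes, and these set integrals characterize `f_X(X) = E[T | X]`. The loss is symmetric in
its two predictions, so the same argument applies to `f_Z`.
-/

open MeasureTheory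

section Projection

variable {Ω : Type*} {m m0 : MeasurableSpace Ω} {μ : Measure Ω}

theorem integral_sq_add_indicator_const [IsFiniteMeasure μ] {u : Ω → ℝ} (hu : MemLp u 2 μ)
    {s : Set Ω} (hs : MeasurableSet s) (t : ℝ) :
    ∫ ω, (u ω + s.indicator (fun _ => t) ω) ^ 2 ∂μ =
      ∫ ω, u ω ^ 2 ∂μ + 2 * t * ∫ ω in s, u ω ∂μ + t ^ 2 * μ.real s := by
  have hpoint : ∀ ω, (u ω + s.indicator (fun _ => t) ω) ^ 2 =
      u ω ^ 2 + 2 * t * s.indicator u ω + t ^ 2 * s.indicator 1 ω := by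
    intro ω
    by_cases hω : ω ∈ s
    · simp only [hω, Set.indicator_of_mem, Pi.one_apply, mul_one]; ring
    · simp only [hω, not_false_eq_true, Set.indicator_of_notMem, add_zero, mul_zero]
  have hu_ind : Integrable (s.indicator u) μ := (hu.integrable one_le_two).indicator hs
  have hone : Integrable (s.indicator (1 : Ω → ℝ)) μ := (integrable_const 1).indicator hs
  simp_rw [hpoint]
  rw [integral_add (f := fun ω => u ω ^ 2 + 2 * t * s.indicator u ω)
      (hu.integrable_sq.add (hu_ind.const_mul _)) (hone.const_mul _),
    integral_add hu.integrable_sq (hu_ind.const_mul _), integral_const_mul, integral_const_mul,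
    integral_indicator hs, integral_indicator_one hs]

theorem ae_eq_condExp_of_forall_integral_sq_le [IsFiniteMeasure μ] (hm : m ≤ m0)
    {h T : Ω → ℝ} (hh : MemLp h 2 μ) (hhm : StronglyMeasurable[m] h) (hT : MemLp T 2 μ)
    (hmin : ∀ s, MeasurableSet[m] s → ∀ t : ℝ,
      ∫ ω, (h ω - T ω) ^ 2 ∂μ ≤ ∫ ω, (h ω + s.indicator (fun _ => t) ω - T ω) ^ 2 ∂μ) :
    h =ᵐ[μ] μ[T|m] := by
  refine ae_eq_condExp_of_forall_setIntegral_eq hm (hT.integrable one_le_two)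
    (fun s _ _ => (hh.integrable one_le_two).integrableOn) (fun s hs _ => ?_)
    hhm.aestronglyMeasurable
  have hquad : ∀ t : ℝ, 0 ≤ μ.real s * (t * t) + 2 * (∫ ω in s, h ω - T ω ∂μ) * t + 0 := by
    intro t
    have := hmin s hs t
    simp_rw [← sub_add_eq_add_sub] at this
    rw [integral_sq_add_indicator_const (u := fun ω => h ω - T ω) (hh.sub hT) (hm s hs)] at this
    linarith
  have hzero : ∫ ω in s, h ω - T ω ∂μ = 0 := by
    have := discrim_le_zero hquad
    rw [discrim] at this
    nlinarith [sq_nonneg (∫ ω in s, h ω - T ω ∂μ)]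
  rwa [integral_sub (hh.integrable one_le_two).integrableOn (hT.integrable one_le_two).integrableOn,
    sub_eq_zero] at hzero

theorem ae_eq_condExp_comap_of_forall_integral_sq_le [IsFiniteMeasure μ] {E : Type*}
    [MeasurableSpace E] {W : Ω → E} (hW : Measurable W) {f : E → ℝ} (hf : Measurable f)
    (hf2 : MemLp (fun ω => f (W ω)) 2 μ) {T : Ω → ℝ} (hT : MemLp T 2 μ)
    (hmin : ∀ g : E → ℝ, Measurable g → MemLp (fun ω => g (W ω)) 2 μ →
      ∫ ω, (f (W ω) - T ω) ^ 2 ∂μ ≤ ∫ ω, (g (W ω) - T ω) ^ 2 ∂μ) :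
    (fun ω => f (W ω)) =ᵐ[μ] μ[T | MeasurableSpace.comap W inferInstance] := by
  refine ae_eq_condExp_of_forall_integral_sq_le hW.comap_le hf2
    (hf.comp (comap_measurable W)).stronglyMeasurable hT ?_
  rintro _ ⟨A, hA, rfl⟩ t
  have hpert : ∀ ω, (f + A.indicator fun _ => t) (W ω) =
      f (W ω) + (W ⁻¹' A).indicator (fun _ => t) ω := fun ω => by
    simp [← Set.indicator_comp_right, Function.comp_def]
  have hpert2 : MemLp (fun ω => (f + A.indicator fun _ => t) (W ω)) 2 μ := by
    simp_rw [hpert]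
    exact hf2.add (memLp_indicator_const 2 (hW hA) t (Or.inr (measure_ne_top μ _)))
  simpa only [hpert] using hmin _ (hf.add (measurable_const.indicator hA)) hpert2

end Projection

section CooperativeLearning

noncomputable def coopLoss (ρ y a b : ℝ) : ℝ := 1 / 2 * (y - a - b) ^ 2 + ρ / 2 * (a - b) ^ 2

/-- The minimizer of `coopLoss ρ y · b` when `1 + ρ > 0`. -/
noncomputable def coopTarget (ρ y b : ℝ) : ℝ := y / (1 + ρ) - (1 - ρ) * b / (1 + ρ)

theorem coopLoss_comm (ρ y a b : ℝ) : coopLoss ρ y a b = coopLoss ρ y b a := by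
  unfold coopLoss
  ring

theorem coopLoss_eq_sq_add {ρ : ℝ} (hρ : 1 + ρ ≠ 0) (y a b : ℝ) :
    coopLoss ρ y a b =
      (1 + ρ) / 2 * (a - coopTarget ρ y b) ^ 2 + coopLoss ρ y (coopTarget ρ y b) b := by
  unfold coopLoss coopTarget
  field_simp
  ring

variable {Ω : Type*} [MeasurableSpace Ω] {μ : Measure Ω}

theorem memLp_coopTarget (ρ : ℝ) {y b : Ω → ℝ} (hy : MemLp y 2 μ) (hb : MemLp b 2 μ) :
    MemLp (fun ω => coopTarget ρ (y ω) (b ω)) 2 μ := by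
  simpa only [coopTarget, div_eq_mul_inv, Pi.sub_def] using
    (hy.mul_const (1 + ρ)⁻¹).sub ((hb.const_mul (1 - ρ)).mul_const (1 + ρ)⁻¹)

theorem integrable_coopLoss (ρ : ℝ) {y a b : Ω → ℝ} (hy : MemLp y 2 μ) (ha : MemLp a 2 μ)
    (hb : MemLp b 2 μ) : Integrable (fun ω => coopLoss ρ (y ω) (a ω) (b ω)) μ :=
  (((hy.sub ha).sub hb).integrable_sq.const_mul _).add ((ha.sub hb).integrable_sq.const_mul _)

theorem integral_sq_sub_coopTarget_le_of_integral_coopLoss_le {ρ : ℝ} (hρ : 0 < 1 + ρ)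
    {y a a' b : Ω → ℝ} (hy : MemLp y 2 μ) (ha : MemLp a 2 μ) (ha' : MemLp a' 2 μ)
    (hb : MemLp b 2 μ)
    (hle : ∫ ω, coopLoss ρ (y ω) (a ω) (b ω) ∂μ ≤ ∫ ω, coopLoss ρ (y ω) (a' ω) (b ω) ∂μ) :
    ∫ ω, (a ω - coopTarget ρ (y ω) (b ω)) ^ 2 ∂μ ≤
      ∫ ω, (a' ω - coopTarget ρ (y ω) (b ω)) ^ 2 ∂μ := by
  have hT := memLp_coopTarget ρ hy hb
  have hsplit : ∀ c : Ω → ℝ, MemLp c 2 μ → ∫ ω, coopLoss ρ (y ω) (c ω) (b ω) ∂μ =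
      (1 + ρ) / 2 * ∫ ω, (c ω - coopTarget ρ (y ω) (b ω)) ^ 2 ∂μ +
        ∫ ω, coopLoss ρ (y ω) (coopTarget ρ (y ω) (b ω)) (b ω) ∂μ := fun c hc => by
    have hsq : Integrable (fun ω => (c ω - coopTarget ρ (y ω) (b ω)) ^ 2) μ :=
      (hc.sub hT).integrable_sq
    simp only [coopLoss_eq_sq_add hρ.ne' (y _) (c _) (b _)]
    rw [integral_add (hsq.const_mul _) (integrable_coopLoss ρ hy hT hb),
      integral_const_mul]
  rw [hsplit a ha, hsplit a' ha'] at hle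
  exact le_of_mul_le_mul_left (a := (1 + ρ) / 2) (by linarith) (by positivity)

end CooperativeLearning

/-- Any minimizer of the population cooperative learning objective satisfies the
fixed-point equations
`f_X(X) = E[y/(1+ρ) − (1−ρ)f_Z(Z)/(1+ρ) | X]` and
`f_Z(Z) = E[y/(1+ρ) − (1−ρ)f_X(X)/(1+ρ) | Z]` almost surely. -/
theorem coop_population_fixed_point
    {Ω EX EZ : Type*} [MeasurableSpace Ω] [MeasurableSpace EX] [MeasurableSpace EZ]
    (μ : Measure Ω) [IsProbabilityMeasure μ]
    (X : Ω → EX) (Z : Ω → EZ) (y : Ω → ℝ)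
    (hX : Measurable X) (hZ : Measurable Z) (hy : MemLp y 2 μ)
    (ρ : ℝ) (hρ : 0 ≤ ρ)
    (fX : EX → ℝ) (fZ : EZ → ℝ) (hfX : Measurable fX) (hfZ : Measurable fZ)
    (hfX2 : MemLp (fun ω => fX (X ω)) 2 μ) (hfZ2 : MemLp (fun ω => fZ (Z ω)) 2 μ)
    (hmin : ∀ (gX : EX → ℝ) (gZ : EZ → ℝ), Measurable gX → Measurable gZ →
      MemLp (fun ω => gX (X ω)) 2 μ → MemLp (fun ω => gZ (Z ω)) 2 μ →
      (∫ ω, ((1 / 2) * (y ω - fX (X ω) - fZ (Z ω)) ^ 2 +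
          (ρ / 2) * (fX (X ω) - fZ (Z ω)) ^ 2) ∂μ) ≤
        ∫ ω, ((1 / 2) * (y ω - gX (X ω) - gZ (Z ω)) ^ 2 +
          (ρ / 2) * (gX (X ω) - gZ (Z ω)) ^ 2) ∂μ) :
    (fun ω => fX (X ω)) =ᵐ[μ]
      μ[fun ω => y ω / (1 + ρ) - (1 - ρ) * fZ (Z ω) / (1 + ρ) |
        MeasurableSpace.comap X inferInstance] ∧
    (fun ω => fZ (Z ω)) =ᵐ[μ]
      μ[fun ω => y ω / (1 + ρ) - (1 - ρ) * fX (X ω) / (1 + ρ) |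
        MeasurableSpace.comap Z inferInstance] := by
  have hρ1 : 0 < 1 + ρ := by linarith
  have hminX : ∀ gX : EX → ℝ, Measurable gX → MemLp (fun ω => gX (X ω)) 2 μ →
      ∫ ω, coopLoss ρ (y ω) (fX (X ω)) (fZ (Z ω)) ∂μ ≤
        ∫ ω, coopLoss ρ (y ω) (gX (X ω)) (fZ (Z ω)) ∂μ :=
    fun gX hgX hgX2 => hmin gX fZ hgX hfZ hgX2 hfZ2
  have hminZ : ∀ gZ : EZ → ℝ, Measurable gZ → MemLp (fun ω => gZ (Z ω)) 2 μ →
      ∫ ω, coopLoss ρ (y ω) (fZ (Z ω)) (fX (X ω)) ∂μ ≤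
        ∫ ω, coopLoss ρ (y ω) (gZ (Z ω)) (fX (X ω)) ∂μ := fun gZ hgZ hgZ2 => by
    simp only [coopLoss_comm ρ _ _ (fX (X _))]
    exact hmin fX gZ hfX hgZ hfX2 hgZ2
  exact ⟨ae_eq_condExp_comap_of_forall_integral_sq_le hX hfX hfX2 (memLp_coopTarget ρ hy hfZ2)
      fun gX hgX hgX2 => integral_sq_sub_coopTarget_le_of_integral_coopLoss_le hρ1 hy hfX2 hgX2
        hfZ2 (hminX gX hgX hgX2),
    ae_eq_condExp_comap_of_forall_integral_sq_le hZ hfZ hfZ2 (memLp_coopTarget ρ hy hfX2)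
      fun gZ hgZ hgZ2 => integral_sq_sub_coopTarget_le_of_integral_coopLoss_le hρ1 hy hfZ2 hgZ2
        hfX2 (hminZ gZ hgZ hgZ2)⟩
end

section
/- In the population cooperative learning problem with ρ = 1, minimizing E[(1/2)(y − f_X(X) − f_Z(Z))² + (1/2)(f_X(X) − f_Z(Z))²], the fixed-point equations reduce to f_X(X) = (1/2)E[y | X] and f_Z(Z) = (1/2)E[y | Z]; i.e. the optimal prediction f_X(X)+f_Z(Z) is the average of the two marginal regression functions E[y|X] and E[y|Z]. -/
open MeasureTheory

/-!
By the identity `(1/2)(y - a - b)² + (1/2)(a - b)² = (1/2)y² - y(a + b) + a² + b²` the objective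
separates as `E[y²/2] + E[a² - y a] + E[b² - y b]`, so `a = f_X(X)` minimises `E[a² - y a]` over
square-integrable `σ(X)`-measurable `a`. With `c = E[y | X]`, orthogonality of `y - c` to such `a`
gives `E[a² - y a] = E[(a - c/2)²] + E[(c/2)² - y c/2]`; as `c/2` is itself of the form `g(X)`
(Doob–Dynkin), minimality forces `E[(a - c/2)²] = 0`. The same argument applies to `f_Z(Z)`.
-/

section

variable {Ω : Type*} {m m₀ : MeasurableSpace Ω} {μ : Measure[m₀] Ω} {y a b : Ω → ℝ}

theorem integral_coop_loss_eq (hy : MemLp y 2 μ) (ha : MemLp a 2 μ) (hb : MemLp b 2 μ) :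
    ∫ ω, ((1 / 2) * (y ω - a ω - b ω) ^ 2 + (1 / 2) * (a ω - b ω) ^ 2) ∂μ =
      ∫ ω, (1 / 2) * y ω ^ 2 ∂μ + ∫ ω, (a ω ^ 2 - y ω * a ω) ∂μ +
        ∫ ω, (b ω ^ 2 - y ω * b ω) ∂μ := by
  have hy' : Integrable (fun ω => (1 / 2) * y ω ^ 2) μ := hy.integrable_sq.const_mul _
  have ha' : Integrable (fun ω => a ω ^ 2 - y ω * a ω) μ :=
    ha.integrable_sq.sub (hy.integrable_mul ha)
  have hb' : Integrable (fun ω => b ω ^ 2 - y ω * b ω) μ :=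
    hb.integrable_sq.sub (hy.integrable_mul hb)
  have hya : Integrable (fun ω => (1 / 2) * y ω ^ 2 + (a ω ^ 2 - y ω * a ω)) μ := hy'.add ha'
  rw [← integral_add hy' ha', ← integral_add hya hb']
  exact integral_congr_ae (.of_forall fun ω => by ring)

variable [IsFiniteMeasure μ]

theorem integral_mul_sub_condExp_eq_zero (hm : m ≤ m₀) (ha : StronglyMeasurable[m] a)
    (ha2 : MemLp a 2 μ) (hy : MemLp y 2 μ) :
    ∫ ω, a ω * (y ω - μ[y|m] ω) ∂μ = 0 := by
  have hay : Integrable (fun ω => a ω * y ω) μ := ha2.integrable_mul hy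
  have hac : Integrable (fun ω => a ω * μ[y|m] ω) μ := ha2.integrable_mul (hy.condExp one_le_two)
  have pull_out : ∫ ω, a ω * μ[y|m] ω ∂μ = ∫ ω, a ω * y ω ∂μ :=
    calc ∫ ω, a ω * μ[y|m] ω ∂μ = ∫ ω, μ[a * y|m] ω ∂μ :=
          integral_congr_ae (condExp_mul_of_stronglyMeasurable_left ha hay
            (hy.integrable one_le_two)).symm
      _ = ∫ ω, a ω * y ω ∂μ := integral_condExp hm
  simp only [mul_sub]
  rw [integral_sub hay hac, pull_out, sub_self]

theorem integral_sq_sub_mul_eq_integral_sq_sub_half_condExp_add (hm : m ≤ m₀)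
    (ha : StronglyMeasurable[m] a) (ha2 : MemLp a 2 μ) (hy : MemLp y 2 μ) :
    ∫ ω, (a ω ^ 2 - y ω * a ω) ∂μ =
      ∫ ω, (a ω - (1 / 2) * μ[y|m] ω) ^ 2 ∂μ +
        ∫ ω, (((1 / 2) * μ[y|m] ω) ^ 2 - y ω * ((1 / 2) * μ[y|m] ω)) ∂μ := by
  set c := μ[y|m]
  set d := fun ω => a ω - (1 / 2) * c ω
  have hc2 : MemLp (fun ω => (1 / 2) * c ω) 2 μ := (hy.condExp one_le_two).const_mul _
  have hd2 : MemLp d 2 μ := ha2.sub hc2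
  have hd_orth : ∫ ω, d ω * (y ω - c ω) ∂μ = 0 :=
    integral_mul_sub_condExp_eq_zero hm (ha.sub (stronglyMeasurable_condExp.const_mul _)) hd2 hy
  have hd_sq : Integrable (fun ω => d ω ^ 2) μ := hd2.integrable_sq
  have hc_loss : Integrable (fun ω => ((1 / 2) * c ω) ^ 2 - y ω * ((1 / 2) * c ω)) μ :=
    hc2.integrable_sq.sub (hy.integrable_mul hc2)
  have hd_mul : Integrable (fun ω => d ω * (y ω - c ω)) μ :=
    hd2.integrable_mul (hy.sub (hy.condExp one_le_two))
  calc ∫ ω, (a ω ^ 2 - y ω * a ω) ∂μ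
      = ∫ ω, (d ω ^ 2 + (((1 / 2) * c ω) ^ 2 - y ω * ((1 / 2) * c ω)) -
          d ω * (y ω - c ω)) ∂μ :=
        integral_congr_ae (.of_forall fun ω => by simp only [d]; ring)
    _ = ∫ ω, d ω ^ 2 ∂μ + ∫ ω, (((1 / 2) * c ω) ^ 2 - y ω * ((1 / 2) * c ω)) ∂μ := by
        have hsum : Integrable (fun ω => d ω ^ 2 +
            (((1 / 2) * c ω) ^ 2 - y ω * ((1 / 2) * c ω))) μ := hd_sq.add hc_loss
        rw [integral_sub hsum hd_mul, integral_add hd_sq hc_loss, hd_orth, sub_zero]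

theorem ae_eq_half_condExp_of_integral_le (hm : m ≤ m₀) (ha : StronglyMeasurable[m] a)
    (ha2 : MemLp a 2 μ) (hy : MemLp y 2 μ)
    (hle : ∫ ω, (a ω ^ 2 - y ω * a ω) ∂μ ≤
      ∫ ω, (((1 / 2) * μ[y|m] ω) ^ 2 - y ω * ((1 / 2) * μ[y|m] ω)) ∂μ) :
    a =ᵐ[μ] fun ω => (1 / 2) * μ[y|m] ω := by
  have hsq_int : Integrable (fun ω => (a ω - (1 / 2) * μ[y|m] ω) ^ 2) μ :=
    (ha2.sub ((hy.condExp one_le_two).const_mul _)).integrable_sq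
  have hsq_zero : ∫ ω, (a ω - (1 / 2) * μ[y|m] ω) ^ 2 ∂μ = 0 :=
    le_antisymm
      (by linarith [integral_sq_sub_mul_eq_integral_sq_sub_half_condExp_add hm ha ha2 hy])
      (integral_nonneg fun ω => sq_nonneg _)
  filter_upwards [(integral_eq_zero_iff_of_nonneg (fun ω => sq_nonneg _) hsq_int).1 hsq_zero]
    with ω hω
  exact sub_eq_zero.1 (pow_eq_zero_iff two_ne_zero |>.1 hω)

end

section

variable {Ω E : Type*} [MeasurableSpace Ω] [MeasurableSpace E] {μ : Measure Ω}
  [IsFiniteMeasure μ]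

theorem comp_ae_eq_half_condExp_of_forall_integral_le {W : Ω → E} (hW : Measurable W)
    {y : Ω → ℝ} (hy : MemLp y 2 μ) {f : E → ℝ} (hf : Measurable f)
    (hf2 : MemLp (fun ω => f (W ω)) 2 μ)
    (hmin : ∀ g : E → ℝ, Measurable g → MemLp (fun ω => g (W ω)) 2 μ →
      ∫ ω, (f (W ω) ^ 2 - y ω * f (W ω)) ∂μ ≤ ∫ ω, (g (W ω) ^ 2 - y ω * g (W ω)) ∂μ) :
    (fun ω => f (W ω)) =ᵐ[μ] fun ω => (1 / 2) * μ[y|MeasurableSpace.comap W inferInstance] ω := by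
  obtain ⟨g, hg, hg_eq⟩ :=
    (stronglyMeasurable_condExp.const_mul (1 / 2 : ℝ)).exists_eq_measurable_comp
      (f := W) (g := fun ω => (1 / 2) * μ[y|MeasurableSpace.comap W inferInstance] ω)
  refine ae_eq_half_condExp_of_integral_le hW.comap_le
    (hf.comp (comap_measurable W)).stronglyMeasurable hf2 hy ?_
  have hgW : ∀ ω, g (W ω) = (1 / 2) * μ[y|MeasurableSpace.comap W inferInstance] ω :=
    fun ω => (congrFun hg_eq ω).symm
  have hg2 : MemLp (fun ω => g (W ω)) 2 μ := by
    simpa only [hgW] using (hy.condExp one_le_two).const_mul (1 / 2 : ℝ)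
  simpa only [hgW] using hmin g hg.measurable hg2

end

/-- With `ρ = 1`, any minimizer of the population cooperative learning objective
satisfies `f_X(X) = (1/2)E[y|X]` and `f_Z(Z) = (1/2)E[y|Z]` almost surely, so the
optimal prediction is the average of the two marginal regression functions. -/
theorem coop_population_rho_one
    {Ω EX EZ : Type*} [MeasurableSpace Ω] [MeasurableSpace EX] [MeasurableSpace EZ]
    (μ : Measure Ω) [IsProbabilityMeasure μ]
    (X : Ω → EX) (Z : Ω → EZ) (y : Ω → ℝ)
    (hX : Measurable X) (hZ : Measurable Z) (hy : MemLp y 2 μ)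
    (fX : EX → ℝ) (fZ : EZ → ℝ) (hfX : Measurable fX) (hfZ : Measurable fZ)
    (hfX2 : MemLp (fun ω => fX (X ω)) 2 μ) (hfZ2 : MemLp (fun ω => fZ (Z ω)) 2 μ)
    (hmin : ∀ (gX : EX → ℝ) (gZ : EZ → ℝ), Measurable gX → Measurable gZ →
      MemLp (fun ω => gX (X ω)) 2 μ → MemLp (fun ω => gZ (Z ω)) 2 μ →
      (∫ ω, ((1 / 2) * (y ω - fX (X ω) - fZ (Z ω)) ^ 2 +
          (1 / 2) * (fX (X ω) - fZ (Z ω)) ^ 2) ∂μ) ≤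
        ∫ ω, ((1 / 2) * (y ω - gX (X ω) - gZ (Z ω)) ^ 2 +
          (1 / 2) * (gX (X ω) - gZ (Z ω)) ^ 2) ∂μ) :
    (fun ω => fX (X ω)) =ᵐ[μ]
      (fun ω => (1 / 2) * (μ[y | MeasurableSpace.comap X inferInstance]) ω) ∧
    (fun ω => fZ (Z ω)) =ᵐ[μ]
      (fun ω => (1 / 2) * (μ[y | MeasurableSpace.comap Z inferInstance]) ω) := by
  constructor
  · refine comp_ae_eq_half_condExp_of_forall_integral_le hX hy hfX hfX2 fun g hg hg2 => ?_
    linarith [hmin g fZ hg hfZ hg2 hfZ2, integral_coop_loss_eq hy hfX2 hfZ2,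
      integral_coop_loss_eq hy hg2 hfZ2]
  · refine comp_ae_eq_half_condExp_of_forall_integral_le hZ hy hfZ hfZ2 fun g hg hg2 => ?_
    linarith [hmin fX g hfX hg hfX2 hg2, integral_coop_loss_eq hy hfX2 hfZ2,
      integral_coop_loss_eq hy hfX2 hg2]
end

section
/- Under the latent factor model, Y_i can be decomposed as Y_i = θ*_x X_i + θ*_z Z_i + ε*_i, where θ*_x = γ_x γ_y/(σ_x² + γ_x² + γ_z² σ_x²/σ_z²), θ*_z = γ_z γ_y/(σ_z² + γ_z² + γ_x² σ_z²/σ_x²), and ε*_i is Gaussian with mean 0 and variance σ*² = γ_y²/(1 + γ_x²/σ_x² + γ_z²/σ_z²) + σ_y², independent of (X_i, Z_i). -/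
/-!
Write `G = (U, ε_y, ε_x, ε_z)`, a vector of independent centred Gaussians. Then
`ε* = c U + ε_y - θ*_x ε_x - θ*_z ε_z` with `c = γ_y - θ*_x γ_x - θ*_z γ_z`, and `X`, `Z` are also
linear forms in `G`, so `(ε*, X, Z)` is jointly Gaussian. The coefficients `θ*` are exactly those
solving the normal equations `c γ_x = θ*_x σ_x²`, `c γ_z = θ*_z σ_z²`, which say that `ε*` is
uncorrelated with `X` and `Z`; for jointly Gaussian variables this is independence. The variance
of `ε*` is `c² + σ_y² + θ*_x² σ_x² + θ*_z² σ_z²`, which simplifies to `σ*²`.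
-/

open MeasureTheory ProbabilityTheory

namespace ProbabilityTheory

variable {Ω ι : Type*} [MeasurableSpace Ω] {P : Measure Ω} [Fintype ι] {G : ι → Ω → ℝ}
  {m : ι → ℝ} {v : ι → NNReal}

lemma HasGaussianLaw.dotProduct (hG : HasGaussianLaw (fun ω ↦ (G · ω)) P) (a : ι → ℝ) :
    HasGaussianLaw (fun ω ↦ a ⬝ᵥ (G · ω)) P :=
  hG.map_fun (dotProductBilin ℝ ℝ a).toContinuousLinearMap

lemma HasGaussianLaw.dotProduct_prodMk (hG : HasGaussianLaw (fun ω ↦ (G · ω)) P)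
    (a b c : ι → ℝ) :
    HasGaussianLaw (fun ω ↦ (a ⬝ᵥ (G · ω), (b ⬝ᵥ (G · ω), c ⬝ᵥ (G · ω)))) P :=
  let L (x : ι → ℝ) : (ι → ℝ) →L[ℝ] ℝ := (dotProductBilin ℝ ℝ x).toContinuousLinearMap
  hG.map_fun ((L a).prod ((L b).prod (L c)))

lemma HasGaussianLaw.indepFun_prodMk_of_covariance_eq_zero {X Y Z : Ω → ℝ}
    (h : HasGaussianLaw (fun ω ↦ (X ω, (Y ω, Z ω))) P) (hXY : cov[X, Y; P] = 0)
    (hXZ : cov[X, Z; P] = 0) : IndepFun X (fun ω ↦ (Y ω, Z ω)) P := by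
  have := h.isProbabilityMeasure
  refine h.indepFun_of_covariance_strongDual fun L₁ L₂ ↦ ?_
  have h₁ : L₁ ∘ X = L₁ 1 • X := by
    ext ω
    simpa [mul_comm] using L₁.map_smul (X ω) 1
  have h₂ : L₂ ∘ (fun ω ↦ (Y ω, Z ω)) = L₂ (1, 0) • Y + L₂ (0, 1) • Z := by
    ext ω
    have : ((Y ω, Z ω) : ℝ × ℝ) = Y ω • (1, 0) + Z ω • (0, 1) := by simp
    simp only [Function.comp_apply, this, map_add, map_smul, Pi.add_apply, Pi.smul_apply,
      smul_eq_mul, mul_comm]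
  rw [h₁, h₂, covariance_smul_left, covariance_add_right h.fst.memLp_two
    (h.snd.fst.memLp_two.const_smul _) (h.snd.snd.memLp_two.const_smul _),
    covariance_smul_right, covariance_smul_right, hXY, hXZ]
  simp

lemma iIndepFun.covariance_dotProduct (hG : iIndepFun G P) (hL2 : ∀ i, MemLp (G i) 2 P)
    (a b : ι → ℝ) :
    cov[fun ω ↦ a ⬝ᵥ (G · ω), fun ω ↦ b ⬝ᵥ (G · ω); P] = ∑ i, a i * b i * Var[G i; P] := by
  have := hG.isProbabilityMeasure
  classical
  simp only [dotProduct]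
  rw [covariance_fun_sum_fun_sum (fun i ↦ (hL2 i).const_mul _) (fun i ↦ (hL2 i).const_mul _)]
  refine Finset.sum_congr rfl fun i _ ↦ ?_
  rw [Finset.sum_eq_single i]
  · rw [covariance_const_mul_left, covariance_const_mul_right,
      covariance_self (hL2 i).aestronglyMeasurable.aemeasurable]
    ring
  · intro j _ hji
    rw [covariance_const_mul_left, covariance_const_mul_right,
      (hG.indepFun hji.symm).covariance_eq_zero (hL2 i) (hL2 j)]
    ring
  · simp

lemma iIndepFun.hasLaw_dotProduct_gaussianReal (hG : iIndepFun G P)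
    (hlaw : ∀ i, HasLaw (G i) (gaussianReal (m i) (v i)) P) (a : ι → ℝ) :
    HasLaw (fun ω ↦ a ⬝ᵥ (G · ω)) (gaussianReal (a ⬝ᵥ m) (∑ i, a i ^ 2 * v i).toNNReal) P := by
  have := hG.isProbabilityMeasure
  have hGauss := (hG.hasGaussianLaw fun i ↦ (hlaw i).hasGaussianLaw).dotProduct a
  have hL2 i := (hlaw i).hasGaussianLaw.memLp_two
  refine ⟨hGauss.aemeasurable, ?_⟩
  rw [hGauss.map_eq_gaussianReal, ← covariance_self hGauss.aemeasurable,
    hG.covariance_dotProduct hL2]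
  congr
  · simp only [dotProduct]
    rw [integral_finsetSum _ fun i _ ↦ ((hL2 i).integrable one_le_two).const_mul _]
    simp only [integral_const_mul, (hlaw _).integral_eq, integral_id_gaussianReal]
  · simp only [(hlaw _).variance_eq, variance_id_gaussianReal, sq]

lemma iIndepFun.indepFun_dotProduct_prodMk_of_gaussianReal (hG : iIndepFun G P)
    (hlaw : ∀ i, HasLaw (G i) (gaussianReal (m i) (v i)) P) {a b c : ι → ℝ}
    (hab : ∑ i, a i * b i * v i = 0) (hac : ∑ i, a i * c i * v i = 0) :
    IndepFun (fun ω ↦ a ⬝ᵥ (G · ω)) (fun ω ↦ (b ⬝ᵥ (G · ω), c ⬝ᵥ (G · ω))) P := by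
  have hL2 i := (hlaw i).hasGaussianLaw.memLp_two
  have hvar i : Var[G i; P] = v i := by
    rw [(hlaw i).variance_eq, variance_id_gaussianReal]
  refine ((hG.hasGaussianLaw fun i ↦ (hlaw i).hasGaussianLaw).dotProduct_prodMk a b c
    ).indepFun_prodMk_of_covariance_eq_zero ?_ ?_
  · rwa [hG.covariance_dotProduct hL2, Finset.sum_congr rfl fun i _ ↦ by rw [hvar]]
  · rwa [hG.covariance_dotProduct hL2, Finset.sum_congr rfl fun i _ ↦ by rw [hvar]]

end ProbabilityTheory

lemma latentFactor_coeff_identities {γx γy γz σx σz θx θz : ℝ} (hσx : σx ≠ 0) (hσz : σz ≠ 0)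
    (hθx : θx = γx * γy / (σx ^ 2 + γx ^ 2 + γz ^ 2 * σx ^ 2 / σz ^ 2))
    (hθz : θz = γz * γy / (σz ^ 2 + γz ^ 2 + γx ^ 2 * σz ^ 2 / σx ^ 2)) :
    (γy - θx * γx - θz * γz) * γx = θx * σx ^ 2 ∧
    (γy - θx * γx - θz * γz) * γz = θz * σz ^ 2 ∧
    (γy - θx * γx - θz * γz) ^ 2 + θx ^ 2 * σx ^ 2 + θz ^ 2 * σz ^ 2 =
      γy ^ 2 / (1 + γx ^ 2 / σx ^ 2 + γz ^ 2 / σz ^ 2) := by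
  have hDx : σx ^ 2 + γx ^ 2 + γz ^ 2 * σx ^ 2 / σz ^ 2 ≠ 0 := by positivity
  have hDz : σz ^ 2 + γz ^ 2 + γx ^ 2 * σz ^ 2 / σx ^ 2 ≠ 0 := by positivity
  have hD : 1 + γx ^ 2 / σx ^ 2 + γz ^ 2 / σz ^ 2 ≠ 0 := by positivity
  subst hθx hθz
  refine ⟨?_, ?_, ?_⟩ <;> field_simp <;> ring

theorem latent_factor_decomposition_general
    {Ω : Type*} [MeasurableSpace Ω] (μ : Measure Ω) [IsProbabilityMeasure μ]
    (γx γy γz σx σy σz : ℝ) (hσx : 0 < σx) (hσz : 0 < σz)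
    (U εy εx εz : Ω → ℝ) (hU : Measurable U) (hεy : Measurable εy)
    (hεx : Measurable εx) (hεz : Measurable εz)
    (hindep : iIndepFun ![U, εy, εx, εz] μ)
    (hUd : Measure.map U μ = gaussianReal 0 1)
    (hεyd : Measure.map εy μ = gaussianReal 0 (Real.toNNReal (σy ^ 2)))
    (hεxd : Measure.map εx μ = gaussianReal 0 (Real.toNNReal (σx ^ 2)))
    (hεzd : Measure.map εz μ = gaussianReal 0 (Real.toNNReal (σz ^ 2)))
    (Y X Z : Ω → ℝ)
    (hY : Y = fun ω => γy * U ω + εy ω)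
    (hX : X = fun ω => γx * U ω + εx ω) (hZ : Z = fun ω => γz * U ω + εz ω)
    (θxs θzs : ℝ)
    (hθxs : θxs = γx * γy / (σx ^ 2 + γx ^ 2 + γz ^ 2 * σx ^ 2 / σz ^ 2))
    (hθzs : θzs = γz * γy / (σz ^ 2 + γz ^ 2 + γx ^ 2 * σz ^ 2 / σx ^ 2))
    (εstar : Ω → ℝ) (hεstar : εstar = fun ω => Y ω - θxs * X ω - θzs * Z ω) :
    Measure.map εstar μ =
      gaussianReal 0
        (Real.toNNReal (γy ^ 2 / (1 + γx ^ 2 / σx ^ 2 + γz ^ 2 / σz ^ 2) + σy ^ 2)) ∧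
    IndepFun εstar (fun ω => (X ω, Z ω)) μ := by
  set G := ![U, εy, εx, εz]
  set v : Fin 4 → NNReal := ![1, (σy ^ 2).toNNReal, (σx ^ 2).toNNReal, (σz ^ 2).toNNReal]
  have hlaw : ∀ i, HasLaw (G i) (gaussianReal ((0 : Fin 4 → ℝ) i) (v i)) μ := fun i ↦ by
    fin_cases i
    exacts [⟨hU.aemeasurable, hUd⟩, ⟨hεy.aemeasurable, hεyd⟩, ⟨hεx.aemeasurable, hεxd⟩,
      ⟨hεz.aemeasurable, hεzd⟩]
  have hv (w : Fin 4 → ℝ) :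
      ∑ i, w i * v i = w 0 + w 1 * σy ^ 2 + w 2 * σx ^ 2 + w 3 * σz ^ 2 := by
    simp [Fin.sum_univ_four, v, Real.coe_toNNReal _ (sq_nonneg _)]
  obtain ⟨hnormalX, hnormalZ, hvar⟩ := latentFactor_coeff_identities hσx.ne' hσz.ne' hθxs hθzs
  set a : Fin 4 → ℝ := ![γy - θxs * γx - θzs * γz, 1, -θxs, -θzs]
  set b : Fin 4 → ℝ := ![γx, 0, 1, 0]
  set d : Fin 4 → ℝ := ![γz, 0, 0, 1]
  have hεstar_eq : εstar = fun ω ↦ a ⬝ᵥ (G · ω) := by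
    ext ω
    simp only [hεstar, hY, hX, hZ, dotProduct, Fin.sum_univ_four, a, G, Matrix.cons_val_zero,
      Matrix.cons_val_one, Matrix.cons_val]
    ring
  have hX_eq : X = fun ω ↦ b ⬝ᵥ (G · ω) := by
    ext ω; simp [hX, dotProduct, Fin.sum_univ_four, b, G]
  have hZ_eq : Z = fun ω ↦ d ⬝ᵥ (G · ω) := by
    ext ω; simp [hZ, dotProduct, Fin.sum_univ_four, d, G]
  refine ⟨?_, ?_⟩
  · rw [hεstar_eq, (hindep.hasLaw_dotProduct_gaussianReal hlaw a).map_eq, dotProduct_zero, hv]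
    congr 2
    simp only [a, Matrix.cons_val_zero, Matrix.cons_val_one, Matrix.cons_val]
    linear_combination hvar
  · rw [hεstar_eq, hX_eq, hZ_eq]
    refine hindep.indepFun_dotProduct_prodMk_of_gaussianReal hlaw ?_ ?_ <;>
      simp only [hv, a, b, d, Matrix.cons_val_zero, Matrix.cons_val_one, Matrix.cons_val]
    exacts [by linear_combination hnormalX, by linear_combination hnormalZ]

/-- Under the latent factor model, `Y = θ*_x X + θ*_z Z + ε*` where
`ε* ~ N(0, σ*²)` is independent of `(X, Z)`, with
`θ*_x = γ_x γ_y/(σ_x² + γ_x² + γ_z²σ_x²/σ_z²)`,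
`θ*_z = γ_z γ_y/(σ_z² + γ_z² + γ_x²σ_z²/σ_x²)` and
`σ*² = γ_y²/(1 + γ_x²/σ_x² + γ_z²/σ_z²) + σ_y²`. -/
theorem latent_factor_decomposition
    {Ω : Type*} [MeasurableSpace Ω] (μ : Measure Ω) [IsProbabilityMeasure μ]
    (γx γy γz σx σy σz : ℝ) (hσx : 0 < σx) (hσy : 0 < σy) (hσz : 0 < σz)
    (U εy εx εz : Ω → ℝ) (hU : Measurable U) (hεy : Measurable εy)
    (hεx : Measurable εx) (hεz : Measurable εz)
    (hindep : iIndepFun ![U, εy, εx, εz] μ)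
    (hUd : Measure.map U μ = gaussianReal 0 1)
    (hεyd : Measure.map εy μ = gaussianReal 0 (Real.toNNReal (σy ^ 2)))
    (hεxd : Measure.map εx μ = gaussianReal 0 (Real.toNNReal (σx ^ 2)))
    (hεzd : Measure.map εz μ = gaussianReal 0 (Real.toNNReal (σz ^ 2)))
    (Y X Z : Ω → ℝ)
    (hY : Y = fun ω => γy * U ω + εy ω)
    (hX : X = fun ω => γx * U ω + εx ω) (hZ : Z = fun ω => γz * U ω + εz ω)
    (θxs θzs : ℝ)
    (hθxs : θxs = γx * γy / (σx ^ 2 + γx ^ 2 + γz ^ 2 * σx ^ 2 / σz ^ 2))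
    (hθzs : θzs = γz * γy / (σz ^ 2 + γz ^ 2 + γx ^ 2 * σz ^ 2 / σx ^ 2))
    (εstar : Ω → ℝ) (hεstar : εstar = fun ω => Y ω - θxs * X ω - θzs * Z ω) :
    Measure.map εstar μ =
      gaussianReal 0
        (Real.toNNReal (γy ^ 2 / (1 + γx ^ 2 / σx ^ 2 + γz ^ 2 / σz ^ 2) + σy ^ 2)) ∧
    IndepFun εstar (fun ω => (X ω, Z ω)) μ :=
  latent_factor_decomposition_general μ γx γy γz σx σy σz hσx hσz U εy εx εz hU hεy hεx hεz hindep
    hUd hεyd hεxd hεzd Y X Z hY hX hZ θxs θzs hθxs hθzs εstar hεstar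
end

section
/- In the one-feature-per-view cooperative least squares problem with response y and columns x, z ∈ ℝⁿ, the estimator θ̂_x = [(1+ρ)(zᵀz)(xᵀy) − (1−ρ)(xᵀz)(zᵀy)]/det, with det = (1+ρ)²(xᵀx)(zᵀz) − (1−ρ)²(xᵀz)², satisfies: if E[y | x, z] = θ*_x x + θ*_z z, then E[θ̂_x − θ*_x | x, z] = [ρ(−θ*_x((xᵀx)(zᵀz) + (xᵀz)²) + 2θ*_z(xᵀz)(zᵀz)) − ρ²θ*_x((xᵀx)(zᵀz) − (xᵀz)²)]/det. In particular, at ρ = 0 the estimator θ̂_x is conditionally unbiased: E[θ̂_x − θ*_x | x, z] = 0. -/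
/-!
`θ̂_x` is linear in `y`, so its mean is obtained by replacing `xᵀy` and `zᵀy` with their means
`θ*_x xᵀx + θ*_z xᵀz` and `θ*_x xᵀz + θ*_z zᵀz`; the bias formula is then an identity of rational
functions. At `ρ = 0` its numerator vanishes identically.
-/

open MeasureTheory

theorem integral_sum_mul_of_integral_eq {ι Ω : Type*} [Fintype ι] [MeasurableSpace Ω]
    {μ : Measure Ω} {y : Ω → ι → ℝ} {u v : ι → ℝ} {α β : ℝ}
    (hint : ∀ i, Integrable (fun ω => y ω i) μ)
    (hmean : ∀ i, ∫ ω, y ω i ∂μ = α * u i + β * v i) (a : ι → ℝ) :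
    ∫ ω, ∑ i, a i * y ω i ∂μ = α * ∑ i, a i * u i + β * ∑ i, a i * v i := by
  rw [integral_finsetSum _ fun i _ => (hint i).const_mul _]
  simp only [integral_const_mul, hmean, Finset.mul_sum, ← Finset.sum_add_distrib]
  exact Finset.sum_congr rfl fun i _ => by ring

theorem coop_bias_eq (ρ θx θz xx zz xz d : ℝ)
    (hd : d = (1 + ρ) ^ 2 * xx * zz - (1 - ρ) ^ 2 * xz ^ 2) (hd0 : d ≠ 0) :
    ((1 + ρ) * zz * (θx * xx + θz * xz) - (1 - ρ) * xz * (θx * xz + θz * zz)) / d - θx =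
      (ρ * (θx * (-(xx * zz) - xz ^ 2) + 2 * θz * xz * zz) -
        ρ ^ 2 * θx * (xx * zz - xz ^ 2)) / d := by
  rw [eq_div_iff hd0, sub_mul, div_mul_cancel₀ _ hd0, hd]
  ring

theorem coop_estimator_conditional_bias_general
    {Ω : Type*} [MeasurableSpace Ω] (μ : Measure Ω)
    (n : ℕ) (x z : Fin n → ℝ) (ρ : ℝ)
    (θxs θzs : ℝ) (y : Ω → Fin n → ℝ)
    (hint : ∀ i, Integrable (fun ω => y ω i) μ)
    (hmean : ∀ i, (∫ ω, y ω i ∂μ) = θxs * x i + θzs * z i)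
    (xx zz xz d : ℝ)
    (hxx : xx = ∑ i, x i * x i) (hzz : zz = ∑ i, z i * z i)
    (hxz : xz = ∑ i, x i * z i)
    (hd : d = (1 + ρ) ^ 2 * xx * zz - (1 - ρ) ^ 2 * xz ^ 2) (hd0 : d ≠ 0)
    (θhatx : Ω → ℝ)
    (hθhatx : θhatx = fun ω =>
      ((1 + ρ) * zz * (∑ i, x i * y ω i) - (1 - ρ) * xz * (∑ i, z i * y ω i)) / d) :
    ((∫ ω, θhatx ω ∂μ) - θxs =
      (ρ * (θxs * (-(xx * zz) - xz ^ 2) + 2 * θzs * xz * zz) -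
        ρ ^ 2 * θxs * (xx * zz - xz ^ 2)) / d) ∧
    (ρ = 0 → (∫ ω, θhatx ω ∂μ) = θxs) := by
  have hsum (a : Fin n → ℝ) : Integrable (fun ω => ∑ i, a i * y ω i) μ :=
    integrable_finsetSum _ fun i _ => (hint i).const_mul _
  have hxy := integral_sum_mul_of_integral_eq hint hmean x
  have hzy := integral_sum_mul_of_integral_eq hint hmean z
  rw [← hxx, ← hxz] at hxy
  rw [← hzz, show ∑ i, z i * x i = xz by simp only [hxz, mul_comm]] at hzy
  have hmeanθ : ∫ ω, θhatx ω ∂μ =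
      ((1 + ρ) * zz * (θxs * xx + θzs * xz) - (1 - ρ) * xz * (θxs * xz + θzs * zz)) / d := by
    simp only [hθhatx, integral_div, integral_sub ((hsum x).const_mul _) ((hsum z).const_mul _),
      integral_const_mul, hxy, hzy]
  have hbias := hmeanθ ▸ coop_bias_eq ρ θxs θzs xx zz xz d hd hd0
  exact ⟨hbias, fun hρ => sub_eq_zero.mp (by simpa [hρ] using hbias)⟩

/-- Conditional bias of the cooperative estimator `θ̂x` in the one-feature-per-view
problem: given that `E[y] = θ*x x + θ*z z` (conditioning on fixed design `x, z`), the
bias of `θ̂x` equals the stated rational expression in `ρ`, and at `ρ = 0` the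
estimator is unbiased. -/
theorem coop_estimator_conditional_bias
    {Ω : Type*} [MeasurableSpace Ω] (μ : Measure Ω) [IsProbabilityMeasure μ]
    (n : ℕ) (x z : Fin n → ℝ) (ρ : ℝ) (hρ : 0 ≤ ρ)
    (θxs θzs : ℝ) (y : Ω → Fin n → ℝ)
    (hint : ∀ i, Integrable (fun ω => y ω i) μ)
    (hmean : ∀ i, (∫ ω, y ω i ∂μ) = θxs * x i + θzs * z i)
    (xx zz xz d : ℝ)
    (hxx : xx = ∑ i, x i * x i) (hzz : zz = ∑ i, z i * z i)
    (hxz : xz = ∑ i, x i * z i)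
    (hd : d = (1 + ρ) ^ 2 * xx * zz - (1 - ρ) ^ 2 * xz ^ 2) (hd0 : d ≠ 0)
    (θhatx : Ω → ℝ)
    (hθhatx : θhatx = fun ω =>
      ((1 + ρ) * zz * (∑ i, x i * y ω i) - (1 - ρ) * xz * (∑ i, z i * y ω i)) / d) :
    ((∫ ω, θhatx ω ∂μ) - θxs =
      (ρ * (θxs * (-(xx * zz) - xz ^ 2) + 2 * θzs * xz * zz) -
        ρ ^ 2 * θxs * (xx * zz - xz ^ 2)) / d) ∧
    (ρ = 0 → (∫ ω, θhatx ω ∂μ) = θxs) :=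
  coop_estimator_conditional_bias_general μ n x z ρ θxs θzs y hint hmean xx zz xz d hxx hzz hxz hd
    hd0 θhatx hθhatx
end

section
/- With Var(y | x, z) = σ*² Iₙ, the conditional covariance of the cooperative estimators satisfies Cov(θ̂_x, θ̂_z | x, z) = (σ*²/det²)[(−1+3ρ)(1+ρ)(xᵀx)(zᵀz)(xᵀz) + (1−ρ)²(xᵀz)³]. -/
/-!
Both estimators are linear in `y`, with coefficient vectors `a / det` and `b / det`. Since
covariance is bilinear and the covariance matrix of `y` is `σ*² I`, their covariance is
`σ*² (a ⬝ᵥ b) / det²`, and expanding `a ⬝ᵥ b` is a polynomial identity in `xᵀx`, `zᵀz`, `xᵀz`.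
-/

open MeasureTheory ProbabilityTheory

theorem covariance_sum_mul_sum_mul_of_isotropic {Ω ι : Type*} [MeasurableSpace Ω]
    {μ : Measure Ω} [IsFiniteMeasure μ] [Fintype ι] [DecidableEq ι] {Y : ι → Ω → ℝ} {σsq : ℝ}
    (hY : ∀ i, MemLp (Y i) 2 μ) (hcov : ∀ i j, cov[Y i, Y j; μ] = if i = j then σsq else 0)
    (a b : ι → ℝ) :
    cov[fun ω ↦ ∑ i, a i * Y i ω, fun ω ↦ ∑ j, b j * Y j ω; μ] = σsq * (a ⬝ᵥ b) := by
  rw [covariance_fun_sum_fun_sum (fun i ↦ (hY i).const_mul (a i))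
    (fun j ↦ (hY j).const_mul (b j))]
  simp only [covariance_const_mul_left, covariance_const_mul_right, hcov, mul_ite, mul_zero,
    Finset.sum_ite_eq, Finset.mem_univ, if_true, dotProduct, Finset.mul_sum]
  exact Finset.sum_congr rfl fun i _ ↦ by ring

theorem coop_coefficients_dotProduct {R ι : Type*} [CommRing R] [Fintype ι] (x z : ι → R)
    (ρ : R) :
    (((1 + ρ) * (z ⬝ᵥ z)) • x - ((1 - ρ) * (x ⬝ᵥ z)) • z) ⬝ᵥ
        (((1 + ρ) * (x ⬝ᵥ x)) • z - ((1 - ρ) * (x ⬝ᵥ z)) • x) =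
      (-1 + 3 * ρ) * (1 + ρ) * (x ⬝ᵥ x) * (z ⬝ᵥ z) * (x ⬝ᵥ z) + (1 - ρ) ^ 2 * (x ⬝ᵥ z) ^ 3 := by
  simp only [dotProduct_sub, sub_dotProduct, dotProduct_smul, smul_dotProduct, smul_eq_mul,
    dotProduct_comm z x]
  ring

theorem coop_estimator_conditional_covariance_general
    {Ω : Type*} [MeasurableSpace Ω] (μ : Measure Ω) [IsProbabilityMeasure μ]
    (n : ℕ) (x z : Fin n → ℝ) (ρ : ℝ) (σstarsq : ℝ)
    (y : Ω → Fin n → ℝ)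
    (hint : ∀ i, Integrable (fun ω => y ω i) μ)
    (hint2 : ∀ i j, Integrable (fun ω => y ω i * y ω j) μ)
    (hcov : ∀ i j, (∫ ω, (y ω i - ∫ ω', y ω' i ∂μ) * (y ω j - ∫ ω', y ω' j ∂μ) ∂μ) =
      if i = j then σstarsq else 0)
    (xx zz xz d : ℝ)
    (hxx : xx = ∑ i, x i * x i) (hzz : zz = ∑ i, z i * z i)
    (hxz : xz = ∑ i, x i * z i)
    (θhatx θhatz : Ω → ℝ)
    (hθhatx : θhatx = fun ω => (∑ i, ((1 + ρ) * zz * x i - (1 - ρ) * xz * z i) * y ω i) / d)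
    (hθhatz : θhatz = fun ω => (∑ i, ((1 + ρ) * xx * z i - (1 - ρ) * xz * x i) * y ω i) / d) :
    (∫ ω, (θhatx ω - ∫ ω', θhatx ω' ∂μ) * (θhatz ω - ∫ ω', θhatz ω' ∂μ) ∂μ) =
      σstarsq / d ^ 2 *
        ((-1 + 3 * ρ) * (1 + ρ) * xx * zz * xz + (1 - ρ) ^ 2 * xz ^ 3) := by
  subst hθhatx hθhatz
  have hY : ∀ i, MemLp (fun ω ↦ y ω i) 2 μ := fun i ↦
    (memLp_two_iff_integrable_sq (hint i).aestronglyMeasurable).2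
      (by simpa only [sq] using hint2 i i)
  let a := ((1 + ρ) * zz) • x - ((1 - ρ) * xz) • z
  let b := ((1 + ρ) * xx) • z - ((1 - ρ) * xz) • x
  have hab : a ⬝ᵥ b = (-1 + 3 * ρ) * (1 + ρ) * xx * zz * xz + (1 - ρ) ^ 2 * xz ^ 3 := by
    subst hxx hzz hxz
    exact coop_coefficients_dotProduct x z ρ
  change cov[fun ω ↦ (∑ i, a i * y ω i) / d, fun ω ↦ (∑ i, b i * y ω i) / d; μ] = _
  rw [covariance_fun_div_left, covariance_fun_div_right,
    covariance_sum_mul_sum_mul_of_isotropic hY hcov, hab]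
  ring

/-- Conditional covariance of the cooperative estimators `θ̂x` and `θ̂z` when `y` has
covariance `σ*² Iₙ` given the fixed design `x, z`. -/
theorem coop_estimator_conditional_covariance
    {Ω : Type*} [MeasurableSpace Ω] (μ : Measure Ω) [IsProbabilityMeasure μ]
    (n : ℕ) (x z : Fin n → ℝ) (ρ : ℝ) (hρ : 0 ≤ ρ) (σstarsq : ℝ)
    (y : Ω → Fin n → ℝ)
    (hint : ∀ i, Integrable (fun ω => y ω i) μ)
    (hint2 : ∀ i j, Integrable (fun ω => y ω i * y ω j) μ)
    (hcov : ∀ i j, (∫ ω, (y ω i - ∫ ω', y ω' i ∂μ) * (y ω j - ∫ ω', y ω' j ∂μ) ∂μ) =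
      if i = j then σstarsq else 0)
    (xx zz xz d : ℝ)
    (hxx : xx = ∑ i, x i * x i) (hzz : zz = ∑ i, z i * z i)
    (hxz : xz = ∑ i, x i * z i)
    (hd : d = (1 + ρ) ^ 2 * xx * zz - (1 - ρ) ^ 2 * xz ^ 2) (hd0 : d ≠ 0)
    (θhatx θhatz : Ω → ℝ)
    (hθhatx : θhatx = fun ω => (∑ i, ((1 + ρ) * zz * x i - (1 - ρ) * xz * z i) * y ω i) / d)
    (hθhatz : θhatz = fun ω => (∑ i, ((1 + ρ) * xx * z i - (1 - ρ) * xz * x i) * y ω i) / d) :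
    (∫ ω, (θhatx ω - ∫ ω', θhatx ω' ∂μ) * (θhatz ω - ∫ ω', θhatz ω' ∂μ) ∂μ) =
      σstarsq / d ^ 2 *
        ((-1 + 3 * ρ) * (1 + ρ) * xx * zz * xz + (1 - ρ) ^ 2 * xz ^ 3) :=
  coop_estimator_conditional_covariance_general μ n x z ρ σstarsq y hint hint2 hcov xx zz xz d hxx
    hzz hxz θhatx θhatz hθhatx hθhatz
end
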